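/- For every positive integer n, the matrix T_n is invertible over ℚ and its inverse is the bi-perdiagonal matrix given by: (T_n⁻¹)(k,l) = 1 if l = ⌊n/k⌋; (T_n⁻¹)(k,l) = −1 if ⌊n/k⌋ < n and l is the successor of ⌊n/k⌋ in S_n; and (T_n⁻¹)(k,l) = 0 otherwise. -/
import Mathlib


open Matrix

noncomputable section

/-- `Sn n` is the set of largest representatives of the finite classes of the
equivalence relation `i ~ j ↔ n / i = n / j` on positive integers. -/
def Sn (n : ℕ) : Finset ℕ := (Finset.Icc 1 n).filter (fun k => n / (k + 1) < n / k)

/-- The successor of `m` in `S_n`: the least element of `S_n` strictly greater than `m`. -/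
def succS (n m : ℕ) : ℕ := sInf {j : ℕ | j ∈ Sn n ∧ m < j}

/-- The matrix `T_n` over `ℚ`, indexed by `S_n`. -/
def Tq (n : ℕ) : Matrix (Sn n) (Sn n) ℚ :=
  fun k l => if (k : ℕ) * (l : ℕ) ≤ n then 1 else 0

namespace SnAux

variable {n k l a j : ℕ}

lemma mem_Sn : k ∈ Sn n ↔ (1 ≤ k ∧ k ≤ n) ∧ n / (k + 1) < n / k := by
  simp [Sn, Finset.mem_filter, Finset.mem_Icc, and_assoc]

lemma pos_of_mem (h : k ∈ Sn n) : 0 < k := (mem_Sn.mp h).1.1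

lemma le_of_mem (h : k ∈ Sn n) : k ≤ n := (mem_Sn.mp h).1.2

lemma div_pos_of_mem (h : k ∈ Sn n) : 0 < n / k :=
  Nat.div_pos (le_of_mem h) (pos_of_mem h)

lemma div_div (h : k ∈ Sn n) : n / (n / k) = k := by
  have hk0 := pos_of_mem h
  have hq0 := div_pos_of_mem h
  refine le_antisymm ?_ ?_
  · by_contra hlt
    push_neg at hlt
    have h1 : k + 1 ≤ n / (n / k) := hlt
    have h2 : (k + 1) * (n / k) ≤ n := (Nat.le_div_iff_mul_le hq0).mp h1
    have h3 : n / k ≤ n / (k + 1) := by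
      rw [Nat.le_div_iff_mul_le (Nat.succ_pos k)]
      calc n / k * (k + 1) = (k + 1) * (n / k) := by ring
        _ ≤ n := h2
    exact absurd h3 (not_le.mpr (mem_Sn.mp h).2)
  · rw [Nat.le_div_iff_mul_le hq0]
    calc k * (n / k) = n / k * k := by ring
      _ ≤ n := Nat.div_mul_le_self n k

lemma div_mem (h : k ∈ Sn n) : n / k ∈ Sn n := by
  have hk0 := pos_of_mem h
  have hq0 := div_pos_of_mem h
  rw [mem_Sn]
  refine ⟨⟨hq0, Nat.div_le_self n k⟩, ?_⟩
  rw [div_div h]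
  by_contra hle
  push_neg at hle
  have h2 : k * (n / k + 1) ≤ n := (Nat.le_div_iff_mul_le (Nat.succ_pos _)).mp hle
  have h3 : n / k + 1 ≤ n / k := by
    rw [Nat.le_div_iff_mul_le hk0]
    calc (n / k + 1) * k = k * (n / k + 1) := by ring
      _ ≤ n := h2
  omega

lemma n_mem (hn : 0 < n) : n ∈ Sn n := by
  rw [mem_Sn]
  refine ⟨⟨hn, le_rfl⟩, ?_⟩
  rw [Nat.div_self hn, Nat.div_eq_of_lt (by omega)]
  omega

lemma anti (hk : k ∈ Sn n) (hl : l ∈ Sn n) (h : k < l) : n / l < n / k := by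
  have h1 : n / l ≤ n / k := Nat.div_le_div_left h.le (pos_of_mem hk)
  rcases h1.lt_or_eq with h2 | h2
  · exact h2
  · exfalso
    have : k = l := by rw [← div_div hk, ← div_div hl, h2]
    omega

lemma succ_spec (hn : 0 < n) (ha : a < n) :
    succS n a ∈ Sn n ∧ a < succS n a := by
  have hne : {j : ℕ | j ∈ Sn n ∧ a < j}.Nonempty := ⟨n, n_mem hn, ha⟩
  exact Nat.sInf_mem hne

lemma succ_le (hj : j ∈ Sn n) (ha : a < j) : succS n a ≤ j :=
  Nat.sInf_le ⟨hj, ha⟩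

end SnAux

open SnAux

theorem stmt16 (n : ℕ) (hn : 0 < n) :
    IsUnit (Tq n) ∧
    ∀ k l : (Sn n),
      (Tq n)⁻¹ k l =
        if (l : ℕ) = n / (k : ℕ) then 1
        else if n / (k : ℕ) < n ∧ (l : ℕ) = succS n (n / (k : ℕ)) then -1
        else 0 := by
  set B : Matrix (Sn n) (Sn n) ℚ := fun k l =>
    if (l : ℕ) = n / (k : ℕ) then 1
    else if n / (k : ℕ) < n ∧ (l : ℕ) = succS n (n / (k : ℕ)) then -1
    else 0 with hBdef
  have hBT : B * Tq n = 1 := by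
    ext k l
    rw [Matrix.mul_apply, Matrix.one_apply]
    have hk := k.2
    have hl := l.2
    have ha : n / (k : ℕ) ∈ Sn n := div_mem hk
    have hdd : n / (n / (k : ℕ)) = (k : ℕ) := div_div hk
    have hl1 : 1 ≤ (l : ℕ) := pos_of_mem hl
    by_cases hc : n / (k : ℕ) < n
    · obtain ⟨hbm, hab⟩ := succ_spec hn hc
      have hne1 : n / (k : ℕ) ≠ succS n (n / (k : ℕ)) := by omega
      have hne2 : succS n (n / (k : ℕ)) ≠ n / (k : ℕ) := by omega
      have hA : (⟨n / (k : ℕ), ha⟩ : (Sn n)) ∈ (Finset.univ : Finset (Sn n)) :=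
        Finset.mem_univ _
      have hB2 : (⟨succS n (n / (k : ℕ)), hbm⟩ : (Sn n)) ∈ (Finset.univ : Finset (Sn n)) :=
        Finset.mem_univ _
      have hsum : ∀ m : (Sn n), B k m * Tq n m l =
          (if m = (⟨n / (k : ℕ), ha⟩ : (Sn n)) then Tq n m l else 0)
          + (if m = (⟨succS n (n / (k : ℕ)), hbm⟩ : (Sn n)) then - Tq n m l else 0) := by
        intro m
        by_cases h1 : (m : ℕ) = n / (k : ℕ)
        · have e1 : m = (⟨n / (k : ℕ), ha⟩ : (Sn n)) := Subtype.ext h1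
          have e2 : m ≠ (⟨succS n (n / (k : ℕ)), hbm⟩ : (Sn n)) := by
            intro h; rw [Subtype.ext_iff] at h; simp only at h; omega
          simp [hBdef, e1, e2, h1, hne1, hne2]
        · have e1 : m ≠ (⟨n / (k : ℕ), ha⟩ : (Sn n)) := by
            intro h; rw [Subtype.ext_iff] at h; exact h1 h
          by_cases h2 : (m : ℕ) = succS n (n / (k : ℕ))
          · have e2 : m = (⟨succS n (n / (k : ℕ)), hbm⟩ : (Sn n)) := Subtype.ext h2
            simp [hBdef, e1, e2, h1, hc, h2, hne1, hne2]
          · have e2 : m ≠ (⟨succS n (n / (k : ℕ)), hbm⟩ : (Sn n)) := by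
              intro h; rw [Subtype.ext_iff] at h; exact h2 h
            simp [hBdef, e1, e2, h1, h2]
      rw [Finset.sum_congr rfl (fun m _ => hsum m), Finset.sum_add_distrib,
        Finset.sum_ite_eq' _ _ (fun m => Tq n m l),
        Finset.sum_ite_eq' _ _ (fun m => - Tq n m l), if_pos hA, if_pos hB2]
      -- now: Tq n ⟨a⟩ l + - Tq n ⟨b⟩ l = if k = l then 1 else 0
      have h1 : (n / (k : ℕ)) * (l : ℕ) ≤ n ↔ (l : ℕ) ≤ (k : ℕ) := by
        rw [mul_comm, ← Nat.le_div_iff_mul_le (div_pos_of_mem hk), hdd]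
      have hb0 : 0 < succS n (n / (k : ℕ)) := pos_of_mem hbm
      have h2 : (succS n (n / (k : ℕ))) * (l : ℕ) ≤ n ↔ (l : ℕ) < (k : ℕ) := by
        rw [mul_comm, ← Nat.le_div_iff_mul_le hb0]
        constructor
        · intro h
          have : n / succS n (n / (k : ℕ)) < n / (n / (k : ℕ)) :=
            anti ha hbm hab
          rw [hdd] at this
          omega
        · intro h
          by_contra hcon
          push_neg at hcon
          have hdb : n / succS n (n / (k : ℕ)) ∈ Sn n := div_mem hbm
          have hlt : n / (k : ℕ) < n / (l : ℕ) := anti hl hk h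
          have hlt2 : n / (l : ℕ) < succS n (n / (k : ℕ)) := by
            have h3 : n / succS n (n / (k : ℕ)) < (l : ℕ) := hcon
            have := anti hdb hl h3
            rwa [div_div hbm] at this
          have := succ_le (div_mem hl) hlt
          omega
      simp only [Tq]
      have hkl_iff : k = l ↔ (k : ℕ) = (l : ℕ) := Subtype.ext_iff
      rcases lt_trichotomy ((l : ℕ)) ((k : ℕ)) with h | h | h
      · have c1 : (n / (k : ℕ)) * (l : ℕ) ≤ n := h1.mpr h.le
        have c2 : (succS n (n / (k : ℕ))) * (l : ℕ) ≤ n := h2.mpr h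
        have hne : ¬ k = l := by rw [hkl_iff]; omega
        rw [if_pos c1, if_pos c2, if_neg hne]; ring
      · have c1 : (n / (k : ℕ)) * (l : ℕ) ≤ n := h1.mpr h.le
        have c2 : ¬ (succS n (n / (k : ℕ))) * (l : ℕ) ≤ n := by rw [h2]; omega
        have he : k = l := hkl_iff.mpr h.symm
        rw [if_pos c1, if_neg c2, if_pos he]; ring
      · have c1 : ¬ (n / (k : ℕ)) * (l : ℕ) ≤ n := by rw [h1]; omega
        have c2 : ¬ (succS n (n / (k : ℕ))) * (l : ℕ) ≤ n := by rw [h2]; omega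
        have hne : ¬ k = l := by rw [hkl_iff]; omega
        rw [if_neg c1, if_neg c2, if_neg hne]; ring
    · -- n / k = n, so k = 1
      have han : n / (k : ℕ) = n := by
        have := Nat.div_le_self n (k : ℕ); omega
      have hk1 : (k : ℕ) = 1 := by
        rw [← hdd, han, Nat.div_self hn]
      have hA : (⟨n / (k : ℕ), ha⟩ : (Sn n)) ∈ (Finset.univ : Finset (Sn n)) :=
        Finset.mem_univ _
      have hsum : ∀ m : (Sn n), B k m * Tq n m l =
          (if m = (⟨n / (k : ℕ), ha⟩ : (Sn n)) then Tq n m l else 0) := by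
        intro m
        by_cases h1 : (m : ℕ) = n / (k : ℕ)
        · have e1 : m = (⟨n / (k : ℕ), ha⟩ : (Sn n)) := Subtype.ext h1
          simp [hBdef, e1, h1]
        · have e1 : m ≠ (⟨n / (k : ℕ), ha⟩ : (Sn n)) := by
            intro h; rw [Subtype.ext_iff] at h; exact h1 h
          simp [hBdef, e1, h1, hc]
      rw [Finset.sum_congr rfl (fun m _ => hsum m),
        Finset.sum_ite_eq' _ _ (fun m => Tq n m l), if_pos hA]
      simp only [Tq, han]
      have h1 : n * (l : ℕ) ≤ n ↔ (l : ℕ) = 1 := by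
        constructor
        · intro h
          nlinarith [hl1, hn]
        · intro h; rw [h, mul_one]
      by_cases hkl : k = l
      · have : (l : ℕ) = 1 := by rw [← hkl, hk1]
        rw [if_pos hkl, if_pos (h1.mpr this)]
      · have hlne : (l : ℕ) ≠ 1 := by
          intro h
          apply hkl
          exact Subtype.ext (by omega)
        rw [if_neg hkl, if_neg (by rw [h1]; exact hlne)]
  have hTB : Tq n * B = 1 := mul_eq_one_comm.mpr hBT
  refine ⟨⟨⟨Tq n, B, hTB, hBT⟩, rfl⟩, ?_⟩
  intro k l
  rw [Matrix.inv_eq_left_inv hBT]
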